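/- arXiv:2210.16297 — 9 statements merged into one kernel-verified Lean document; each statement's English description precedes it below -/
import Mathlib

section
/- Let M be a locally compact Hausdorff space and let U₁,…,U_m be pairwise disjoint, non-empty, open, relatively compact subsets of M. Suppose K is a closed subset of M such that for each i, K meets U_i and K is disjoint from ∂U_i. Then K has at least m connected components. -/
open Set

/-- If `K` is a closed set meeting `m` pairwise disjoint, non-empty, open,
relatively compact sets while missing all of their boundaries, then `K` has at
least `m` connected components. -/
theorem stmt_3 {M : Type*} [TopologicalSpace M] [LocallyCompactSpace M] [T2Space M]
    (m : ℕ) (U : Fin m → Set M)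
    (hdisj : Pairwise fun i j => Disjoint (U i) (U j))
    (hne : ∀ i, (U i).Nonempty) (hopen : ∀ i, IsOpen (U i))
    (hrc : ∀ i, IsCompact (closure (U i)))
    (K : Set M) (hK : IsClosed K)
    (hhit : ∀ i, (K ∩ U i).Nonempty) (hmiss : ∀ i, K ∩ frontier (U i) = ∅) :
    ∃ f : Fin m → ConnectedComponents K, Function.Injective f := by
  -- choose a point of K in each U i
  choose x hxK hxU using hhit
  -- the set of points of K lying in U i is clopen in K
  have hclopen : ∀ i, IsClopen {p : K | (p : M) ∈ U i} := by
    intro i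
    constructor
    · -- closed: equals preimage of closure (U i)
      have heq : {p : K | (p : M) ∈ U i} = ((↑) : K → M) ⁻¹' closure (U i) := by
        ext p
        simp only [mem_setOf_eq, mem_preimage]
        constructor
        · exact fun h => subset_closure h
        · intro h
          rcases (closure_eq_self_union_frontier (U i) ▸ h) with h | h
          · exact h
          · exact absurd (mem_inter p.2 h) (by rw [hmiss i]; exact fun h => h)
      rw [heq]
      exact (isClosed_closure).preimage continuous_subtype_val
    · exact (hopen i).preimage continuous_subtype_val
  refine ⟨fun i => ConnectedComponents.mk ⟨x i, hxK i⟩, fun i j hij => ?_⟩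
  by_contra hne'
  rw [ConnectedComponents.coe_eq_coe] at hij
  have hi : connectedComponent (⟨x i, hxK i⟩ : K) ⊆ {p : K | (p : M) ∈ U i} :=
    (hclopen i).connectedComponent_subset (hxU i)
  have hj : connectedComponent (⟨x j, hxK j⟩ : K) ⊆ {p : K | (p : M) ∈ U j} :=
    (hclopen j).connectedComponent_subset (hxU j)
  have : (⟨x i, hxK i⟩ : K) ∈ connectedComponent (⟨x j, hxK j⟩ : K) := by
    rw [← hij]; exact mem_connectedComponent
  exact (hdisj hne').le_bot ⟨hi mem_connectedComponent, hj this⟩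
end

section
/- Let M be a locally compact Hausdorff space and let U₁,…,U_m be pairwise disjoint, non-empty, open, relatively compact subsets of M. Suppose K is a closed subset of M with exactly m connected components such that for each i, K meets U_i and K is disjoint from ∂U_i. Then K is contained in U₁ ∪ … ∪ U_m, each connected component of K is contained in exactly one U_i, and K is compact. -/
open Set

lemma aux_subset_of_preconnected {M : Type*} [TopologicalSpace M] {s U K : Set M}
    (hU : IsOpen U) (hs : IsPreconnected s) (hsK : s ⊆ K)
    (hmiss : K ∩ frontier U = ∅) (hne : (s ∩ U).Nonempty) : s ⊆ U := by
  have hsub : s ⊆ U ∪ (closure U)ᶜ := by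
    intro x hx
    by_cases h : x ∈ closure U
    · left
      by_contra hxU
      have hf : x ∈ frontier U := by
        rw [frontier, hU.interior_eq]
        exact ⟨h, hxU⟩
      have : x ∈ K ∩ frontier U := ⟨hsK hx, hf⟩
      simp [hmiss] at this
    · right; exact h
  exact hs.subset_left_of_subset_union hU isClosed_closure.isOpen_compl
    (disjoint_compl_right.mono_left subset_closure) hsub hne

/-- If `K` is a closed set with exactly `m` connected components meeting `m`
pairwise disjoint, non-empty, open, relatively compact sets while missing all
of their boundaries, then `K ⊆ U₁ ∪ … ∪ U_m`, each connected component of `K`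
is contained in exactly one `U i`, and `K` is compact. -/
theorem stmt_4 {M : Type*} [TopologicalSpace M] [LocallyCompactSpace M] [T2Space M]
    (m : ℕ) (U : Fin m → Set M)
    (hdisj : Pairwise fun i j => Disjoint (U i) (U j))
    (hne : ∀ i, (U i).Nonempty) (hopen : ∀ i, IsOpen (U i))
    (hrc : ∀ i, IsCompact (closure (U i)))
    (K : Set M) (hK : IsClosed K)
    (hcomp : Nonempty (ConnectedComponents K ≃ Fin m))
    (hhit : ∀ i, (K ∩ U i).Nonempty) (hmiss : ∀ i, K ∩ frontier (U i) = ∅) :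
    K ⊆ ⋃ i, U i ∧
    (∀ x ∈ K, ∃! i : Fin m, connectedComponentIn K x ⊆ U i) ∧
    IsCompact K := by
  obtain ⟨e⟩ := hcomp
  choose x hx using hhit
  have keyA : ∀ (i : Fin m) (s : Set M), IsPreconnected s → s ⊆ K →
      (s ∩ U i).Nonempty → s ⊆ U i := fun i s hs hsK hn =>
    aux_subset_of_preconnected (hopen i) hs hsK (hmiss i) hn
  set f : Fin m → ConnectedComponents K := fun i =>
    ConnectedComponents.mk ⟨x i, (hx i).1⟩ with hf
  have finj : Function.Injective f := by
    intro i j hij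
    have hcc : connectedComponent (⟨x i, (hx i).1⟩ : K)
        = connectedComponent (⟨x j, (hx j).1⟩ : K) :=
      ConnectedComponents.coe_eq_coe.mp hij
    have hIn : connectedComponentIn K (x i) = connectedComponentIn K (x j) := by
      rw [connectedComponentIn_eq_image (hx i).1, connectedComponentIn_eq_image (hx j).1, hcc]
    have h1 : connectedComponentIn K (x i) ⊆ U i :=
      keyA i _ isPreconnected_connectedComponentIn (connectedComponentIn_subset _ _)
        ⟨x i, mem_connectedComponentIn (hx i).1, (hx i).2⟩
    have h2 : connectedComponentIn K (x i) ⊆ U j := by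
      rw [hIn]
      exact keyA j _ isPreconnected_connectedComponentIn (connectedComponentIn_subset _ _)
        ⟨x j, mem_connectedComponentIn (hx j).1, (hx j).2⟩
    by_contra hne'
    exact (hdisj hne').ne_of_mem (h1 (mem_connectedComponentIn (hx i).1))
      (h2 (mem_connectedComponentIn (hx i).1)) rfl
  have fsurj : Function.Surjective f := by
    have hinj : Function.Injective (e ∘ f) := e.injective.comp finj
    have hsur : Function.Surjective (e ∘ f) := Finite.injective_iff_surjective.mp hinj
    intro c
    obtain ⟨i, hi⟩ := hsur (e c)
    exact ⟨i, e.injective hi⟩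
  have main : ∀ x' ∈ K, ∃ i, connectedComponentIn K x' ⊆ U i := by
    intro x' hx'
    obtain ⟨i, hi⟩ := fsurj (ConnectedComponents.mk ⟨x', hx'⟩)
    have hcc : connectedComponent (⟨x i, (hx i).1⟩ : K)
        = connectedComponent (⟨x', hx'⟩ : K) :=
      ConnectedComponents.coe_eq_coe.mp hi
    have hIn : connectedComponentIn K x' = connectedComponentIn K (x i) := by
      rw [connectedComponentIn_eq_image (hx i).1, connectedComponentIn_eq_image hx', hcc]
    refine ⟨i, ?_⟩
    rw [hIn]
    exact keyA i _ isPreconnected_connectedComponentIn (connectedComponentIn_subset _ _)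
      ⟨x i, mem_connectedComponentIn (hx i).1, (hx i).2⟩
  have hKsub : K ⊆ ⋃ i, U i := by
    intro x' hx'
    obtain ⟨i, hi⟩ := main x' hx'
    exact mem_iUnion.mpr ⟨i, hi (mem_connectedComponentIn hx')⟩
  refine ⟨hKsub, ?_, ?_⟩
  · intro x' hx'
    obtain ⟨i, hi⟩ := main x' hx'
    refine ⟨i, hi, ?_⟩
    intro j hj
    by_contra hne'
    exact (hdisj hne').ne_of_mem (hj (mem_connectedComponentIn hx'))
      (hi (mem_connectedComponentIn hx')) rfl
  · have hcpt : IsCompact (⋃ i, K ∩ closure (U i)) :=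
      isCompact_iUnion fun i => (hrc i).of_isClosed_subset (hK.inter isClosed_closure)
        inter_subset_right
    refine hcpt.of_isClosed_subset hK ?_
    intro x' hx'
    obtain ⟨i, hi⟩ := main x' hx'
    exact mem_iUnion.mpr ⟨i, hx', subset_closure (hi (mem_connectedComponentIn hx'))⟩
end

section
/- Let X be a locally compact Hausdorff space and let 𝒦 be a closed subset of the space 2^X of closed subsets of X (with Chabauty topology). Then the upward closure 𝒦⁺ = {A closed in X : A ⊇ K for some K ∈ 𝒦} is closed in 2^X. -/
open Set Filter Topology

/-- The space of closed subsets of `M`. -/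
def Chabauty (M : Type*) [TopologicalSpace M] := {A : Set M // IsClosed A}

/-- The Chabauty (Fell) topology, generated by the sub-basic sets
`Hit U` for `U` open and `Miss K` for `K` compact. -/
instance Chabauty.instTopologicalSpace (M : Type*) [TopologicalSpace M] :
    TopologicalSpace (Chabauty M) :=
  TopologicalSpace.generateFrom
    ({S | ∃ U : Set M, IsOpen U ∧ S = {A : Chabauty M | (A.1 ∩ U).Nonempty}} ∪
     {S | ∃ K : Set M, IsCompact K ∧ S = {A : Chabauty M | A.1 ∩ K = ∅}})

lemma Chabauty.isOpen_hit {M : Type*} [TopologicalSpace M] {U : Set M} (hU : IsOpen U) :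
    IsOpen {A : Chabauty M | (A.1 ∩ U).Nonempty} :=
  TopologicalSpace.isOpen_generateFrom_of_mem (Or.inl ⟨U, hU, rfl⟩)

lemma Chabauty.isOpen_miss {M : Type*} [TopologicalSpace M] {K : Set M} (hK : IsCompact K) :
    IsOpen {A : Chabauty M | A.1 ∩ K = ∅} :=
  TopologicalSpace.isOpen_generateFrom_of_mem (Or.inr ⟨K, hK, rfl⟩)

instance Chabauty.compactSpace (M : Type*) [TopologicalSpace M] :
    CompactSpace (Chabauty M) := by
  rw [← isCompact_univ_iff, isCompact_iff_ultrafilter_le_nhds]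
  intro F _
  set A : Set M := {x | ∀ U : Set M, IsOpen U → x ∈ U →
    {B : Chabauty M | (B.1 ∩ U).Nonempty} ∈ F} with hAdef
  have hA : IsClosed A := by
    rw [← isOpen_compl_iff, isOpen_iff_forall_mem_open]
    intro x hx
    simp only [hAdef, mem_compl_iff, mem_setOf_eq, not_forall] at hx
    obtain ⟨U, hU, hxU, hF⟩ := hx
    exact ⟨U, fun y hy hyA => hF (hyA U hU hy), hU, hxU⟩
  refine ⟨⟨A, hA⟩, mem_univ _, ?_⟩
  refine le_of_le_of_eq ?_ (TopologicalSpace.nhds_generateFrom (α := Chabauty M)).symm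
  refine le_iInf fun s => le_iInf fun hs => ?_
  obtain ⟨hAs, hsg⟩ := hs
  rw [Filter.le_principal_iff]
  rcases hsg with ⟨U, hU, rfl⟩ | ⟨K, hK, rfl⟩
  · obtain ⟨x, hxA, hxU⟩ := hAs
    exact hxA U hU hxU
  · -- A ∩ K = ∅, show {B | B ∩ K = ∅} ∈ F
    have hmiss : ∀ x ∈ K, ∃ U : Set M, IsOpen U ∧ x ∈ U ∧
        {B : Chabauty M | B.1 ∩ U = ∅} ∈ F := by
      intro x hx
      have hxA : x ∉ A := fun h => by
        have : x ∈ A ∩ K := ⟨h, hx⟩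
        rw [hAs] at this; exact this
      simp only [hAdef, mem_setOf_eq, not_forall] at hxA
      obtain ⟨U, hU, hxU, hF⟩ := hxA
      refine ⟨U, hU, hxU, ?_⟩
      have := (F.compl_mem_iff_notMem).2 hF
      convert this using 1
      ext B
      simp [Set.not_nonempty_iff_eq_empty]
    choose! U hUopen hUmem hUF using hmiss
    obtain ⟨t, htK, htcov⟩ := hK.elim_nhds_subcover U fun x hx => (hUopen x hx).mem_nhds (hUmem x hx)
    have hin : (⋂ x ∈ t, {B : Chabauty M | B.1 ∩ U x = ∅}) ∈ F :=
      (Filter.biInter_finset_mem t).2 fun x hx => hUF x (htK x hx)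
    refine F.toFilter.mem_of_superset hin ?_
    intro B hB
    simp only [mem_iInter, mem_setOf_eq] at hB ⊢
    rw [← Set.subset_empty_iff]
    rintro y ⟨hyB, hyK⟩
    obtain ⟨x, hx, hyU⟩ := Set.mem_iUnion₂.1 (htcov hyK)
    have hmem : y ∈ B.1 ∩ U x := ⟨hyB, hyU⟩
    rw [hB x hx] at hmem
    exact hmem

/-- If `𝒦` is a closed family of closed subsets, then its upward closure `𝒦⁺`
is closed in the Chabauty space. -/
theorem stmt_7 {X : Type*} [TopologicalSpace X] [LocallyCompactSpace X] [T2Space X]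
    (𝒦 : Set (Chabauty X)) (hcl : IsClosed 𝒦) :
    IsClosed {A : Chabauty X | ∃ K ∈ 𝒦, K.1 ⊆ A.1} := by
  have h𝒦c : IsCompact 𝒦 := hcl.isCompact
  rw [← isOpen_compl_iff, isOpen_iff_forall_mem_open]
  intro A hA
  simp only [mem_compl_iff, mem_setOf_eq, not_exists, not_and] at hA
  -- for each K ∈ 𝒦 pick x ∈ K \ A and compact C with x ∈ interior C ⊆ C ⊆ Aᶜ
  have hpick : ∀ K ∈ 𝒦, ∃ C : Set X, IsCompact C ∧ (K.1 ∩ interior C).Nonempty ∧ C ⊆ A.1ᶜ := by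
    intro K hK
    have : ¬ K.1 ⊆ A.1 := hA K hK
    obtain ⟨x, hxK, hxA⟩ := Set.not_subset.1 this
    obtain ⟨C, hCc, hxC, hCsub⟩ := exists_compact_subset A.2.isOpen_compl hxA
    exact ⟨C, hCc, ⟨x, hxK, hxC⟩, hCsub⟩
  choose! C hCc hCne hCsub using hpick
  -- cover 𝒦 by the hit sets of interior (C K)
  obtain ⟨t, htsub, htcov⟩ := h𝒦c.elim_nhds_subcover
    (fun K => {B : Chabauty X | (B.1 ∩ interior (C K)).Nonempty})
    (fun K hK => (Chabauty.isOpen_hit isOpen_interior).mem_nhds (hCne K hK))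
  refine ⟨⋂ K ∈ t, {B : Chabauty X | B.1 ∩ C K = ∅}, ?_, ?_, ?_⟩
  · intro B hB
    simp only [mem_iInter, mem_setOf_eq] at hB
    simp only [mem_compl_iff, mem_setOf_eq, not_exists, not_and]
    intro K hK hKB
    obtain ⟨x, hx, hy⟩ := Set.mem_iUnion₂.1 (htcov hK)
    simp only [mem_setOf_eq] at hy
    obtain ⟨y, hyK, hyC⟩ := hy
    have : y ∈ B.1 ∩ C x := ⟨hKB hyK, interior_subset hyC⟩
    rw [hB x hx] at this
    exact this
  · exact isOpen_biInter_finset fun K hK => Chabauty.isOpen_miss (hCc K (htsub K hK))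
  · simp only [mem_iInter, mem_setOf_eq]
    intro K hK
    rw [← Set.subset_empty_iff]
    rintro y ⟨hyA, hyC⟩
    exact hCsub K (htsub K hK) hyC hyA
end

section
/- Let G be a locally compact group, U a symmetric open identity neighbourhood such that the closure of U·U is compact, and H a closed subgroup of G such that H is disjoint from (closure of U·U) \ U. Then the subgroup generated by H ∩ U is contained in U. -/
open Set Pointwise

/-- Ušakov–Wang lemma: if `U` is a symmetric open identity neighbourhood with
`closure (U*U)` compact and the closed subgroup `H` misses
`closure (U*U) \ U`, then the subgroup generated by `H ∩ U` is contained
in `U`. -/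
theorem stmt_9 {G : Type*} [Group G] [TopologicalSpace G] [IsTopologicalGroup G]
    [LocallyCompactSpace G] [T2Space G]
    (U : Set G) (hsym : U⁻¹ = U) (hopen : IsOpen U) (hone : (1 : G) ∈ U)
    (hcpt : IsCompact (closure (U * U)))
    (H : Subgroup G) (hHcl : IsClosed (H : Set G))
    (hmiss : (H : Set G) ∩ (closure (U * U) \ U) = ∅) :
    (Subgroup.closure ((H : Set G) ∩ U) : Set G) ⊆ U := by
  have key : ∀ x ∈ Subgroup.closure ((H : Set G) ∩ U), x ∈ (H : Set G) ∩ U := by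
    intro x hx
    induction hx using Subgroup.closure_induction with
    | mem x hx => exact hx
    | one => exact ⟨H.one_mem, hone⟩
    | mul x y hx hy ihx ihy =>
        refine ⟨H.mul_mem ihx.1 ihy.1, ?_⟩
        by_contra hxy
        have hUU : x * y ∈ closure (U * U) :=
          subset_closure (Set.mul_mem_mul ihx.2 ihy.2)
        have : x * y ∈ (H : Set G) ∩ (closure (U * U) \ U) :=
          ⟨H.mul_mem ihx.1 ihy.1, hUU, hxy⟩
        rw [hmiss] at this
        exact this
    | inv x hx ihx =>
        refine ⟨H.inv_mem ihx.1, ?_⟩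
        rw [← hsym]
        exact Set.inv_mem_inv.mpr ihx.2
  exact fun x hx => (key x hx).2
end

section
/- Let Γ be a group acting by homeomorphisms on a locally compact Hausdorff space M, and let 𝒴 ⊆ 2^M be a closed Γ-invariant subset (for the induced action on the Chabauty space) on which Γ acts minimally and whose elements are all compact. If there exist Y ∈ 𝒴 and a compact set K ⊆ M such that {Z ∈ 𝒴 : Z ⊆ K} is a neighbourhood of Y in 𝒴, then the union of all members of 𝒴 has compact closure in M. -/
open Set Filter Topology

open Pointwise

section Aux

variable {M : Type*} [TopologicalSpace M]

/-- The Chabauty space is compact. -/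
theorem chab_compactSpace : CompactSpace (Chabauty M) := by
  constructor
  rw [isCompact_iff_ultrafilter_le_nhds]
  intro F _
  set Aset : Set M :=
    {x | ∀ V : Set M, IsOpen V → x ∈ V → {B : Chabauty M | (B.1 ∩ V).Nonempty} ∈ F} with hAset
  have hAcl : IsClosed Aset := by
    rw [← isOpen_compl_iff, isOpen_iff_forall_mem_open]
    intro x hx
    simp only [hAset, mem_compl_iff, mem_setOf_eq, not_forall] at hx
    obtain ⟨V, hVo, hxV, hVF⟩ := hx
    exact ⟨V, fun y hy hyA => hVF (hyA V hVo hy), hVo, hxV⟩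
  refine ⟨⟨Aset, hAcl⟩, trivial, ?_⟩
  refine le_nhds_iff.2 ?_
  intro s hmem hop
  have hgen : TopologicalSpace.GenerateOpen
      ({S | ∃ U : Set M, IsOpen U ∧ S = {A : Chabauty M | (A.1 ∩ U).Nonempty}} ∪
       {S | ∃ K : Set M, IsCompact K ∧ S = {A : Chabauty M | A.1 ∩ K = ∅}}) s := hop
  clear hop
  induction hgen with
  | basic s hs =>
    rcases hs with ⟨U, hU, rfl⟩ | ⟨K, hK, rfl⟩
    · obtain ⟨x, hxA, hxU⟩ := hmem
      exact hxA U hU hxU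
    · -- `Aset ∩ K = ∅`; find finitely many misses in `F` forcing `Miss K ∈ F`.
      have hdis : ∀ x ∈ K, x ∉ Aset := fun x hxK hxA =>
        (eq_empty_iff_forall_notMem.1 hmem) x ⟨hxA, hxK⟩
      have hx : ∀ x : M, ∃ V : Set M, IsOpen V ∧
          (x ∈ K → x ∈ V ∧ {B : Chabauty M | (B.1 ∩ V).Nonempty} ∉ F) := by
        intro x
        by_cases hxK : x ∈ K
        · have := hdis x hxK
          simp only [hAset, mem_setOf_eq, not_forall] at this
          obtain ⟨V, hVo, hxV, hVF⟩ := this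
          exact ⟨V, hVo, fun _ => ⟨hxV, hVF⟩⟩
        · exact ⟨∅, isOpen_empty, fun h => absurd h hxK⟩
      choose V hVo hVprop using hx
      obtain ⟨t, htK, htfin, hcov⟩ := hK.elim_finite_subcover_image
        (b := K) (c := V) (fun x _ => hVo x)
        (fun x hxK => mem_biUnion hxK (hVprop x hxK).1)
      have hmem' : (⋂ x ∈ t, {B : Chabauty M | B.1 ∩ V x = ∅}) ∈ F := by
        refine (Filter.biInter_mem htfin).2 fun x hxt => ?_
        have : {B : Chabauty M | B.1 ∩ V x = ∅} =
            {B : Chabauty M | (B.1 ∩ V x).Nonempty}ᶜ := by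
          ext B; simp [not_nonempty_iff_eq_empty]
        rw [this]
        exact (Ultrafilter.compl_mem_iff_notMem).2 (hVprop x (htK hxt)).2
      refine mem_of_superset hmem' ?_
      intro B hB
      simp only [mem_iInter, mem_setOf_eq] at hB ⊢
      rw [eq_empty_iff_forall_notMem]
      rintro x ⟨hxB, hxK⟩
      obtain ⟨y, hyt, hxV⟩ := mem_iUnion₂.1 (hcov hxK)
      exact (eq_empty_iff_forall_notMem.1 (hB y hyt)) x ⟨hxB, hxV⟩
  | univ => exact univ_mem
  | inter s t _ _ ihs iht => exact inter_mem (ihs hmem.1) (iht hmem.2)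
  | sUnion S _ ih =>
    obtain ⟨s, hsS, hmem⟩ := hmem
    exact mem_of_superset (ih s hsS hmem) (subset_sUnion_of_mem hsS)

variable {Γ : Type*} [Group Γ] [MulAction Γ M]

/-- The homeomorphism of `M` given by `γ`. -/
def smulHomeo (hact : ∀ γ : Γ, Continuous fun x : M => γ • x) (γ : Γ) : M ≃ₜ M where
  toFun := fun x => γ • x
  invFun := fun x => γ⁻¹ • x
  left_inv := fun x => inv_smul_smul γ x
  right_inv := fun x => smul_inv_smul γ x
  continuous_toFun := hact γ
  continuous_invFun := hact γ⁻¹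

/-- The action of `γ` on the Chabauty space. -/
noncomputable def chabSMul (hact : ∀ γ : Γ, Continuous fun x : M => γ • x) (γ : Γ) (A : Chabauty M) :
    Chabauty M :=
  ⟨γ • A.1, by
    have : γ • A.1 = (smulHomeo hact γ) '' A.1 := (Set.image_smul).symm
    rw [this]
    exact (smulHomeo hact γ).isClosedMap _ A.2⟩

lemma smul_inter_nonempty (γ : Γ) (s t : Set M) :
    ((γ • s) ∩ t).Nonempty ↔ (s ∩ γ⁻¹ • t).Nonempty := by
  rw [show (γ • s) ∩ t = γ • (s ∩ γ⁻¹ • t) by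
    rw [smul_set_inter, smul_inv_smul], smul_set_nonempty]

lemma chabSMul_continuous (hact : ∀ γ : Γ, Continuous fun x : M => γ • x) (γ : Γ) :
    Continuous (chabSMul hact γ) := by
  rw [Chabauty.instTopologicalSpace, continuous_generateFrom_iff]
  rintro s (⟨U, hU, rfl⟩ | ⟨K, hK, rfl⟩)
  · have : chabSMul hact γ ⁻¹' {A : Chabauty M | (A.1 ∩ U).Nonempty} =
        {A : Chabauty M | (A.1 ∩ γ⁻¹ • U).Nonempty} := by
      ext A
      simp only [mem_preimage, mem_setOf_eq, chabSMul]
      exact smul_inter_nonempty γ A.1 U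
    rw [this]
    exact TopologicalSpace.GenerateOpen.basic _
      (Or.inl ⟨γ⁻¹ • U, by rw [← preimage_smul]; exact hU.preimage (hact γ), rfl⟩)
  · have : chabSMul hact γ ⁻¹' {A : Chabauty M | A.1 ∩ K = ∅} =
        {A : Chabauty M | A.1 ∩ γ⁻¹ • K = ∅} := by
      ext A
      simp only [mem_preimage, mem_setOf_eq, chabSMul, ← not_nonempty_iff_eq_empty]
      exact not_congr (smul_inter_nonempty γ A.1 K)
    rw [this]
    refine TopologicalSpace.GenerateOpen.basic _ (Or.inr ⟨γ⁻¹ • K, ?_, rfl⟩)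
    rw [show γ⁻¹ • K = (fun x => γ⁻¹ • x) '' K from (Set.image_smul).symm]
    exact hK.image (hact γ⁻¹)

end Aux

/-- If a minimal closed invariant family of compact closed subsets has one
member `Y` and a compact `K ⊆ M` with `{Z ∈ 𝒴 | Z ⊆ K}` a neighbourhood of `Y`
in `𝒴`, then the union of the family has compact closure. -/
theorem stmt_11 {M Γ : Type*} [TopologicalSpace M] [LocallyCompactSpace M] [T2Space M]
    [Group Γ] [MulAction Γ M] (hact : ∀ γ : Γ, Continuous fun x : M => γ • x)
    (Y : Set (Chabauty M)) (hne : Y.Nonempty) (hclosed : IsClosed Y)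
    (hcpt : ∀ A ∈ Y, IsCompact A.1)
    (hinv : ∀ γ : Γ, ∀ A ∈ Y, ∀ h : IsClosed (γ • A.1), (⟨γ • A.1, h⟩ : Chabauty M) ∈ Y)
    (hmin : ∀ A ∈ Y, Y ⊆ closure {B : Chabauty M | ∃ γ : Γ, B.1 = γ • A.1})
    (hyp : ∃ Y₀ ∈ Y, ∃ K : Set M, IsCompact K ∧
      {Z | Z ∈ Y ∧ Z.1 ⊆ K} ∈ nhdsWithin Y₀ Y) :
    IsCompact (closure (⋃ A ∈ Y, A.1)) := by
  obtain ⟨Y₀, hY₀, K, hK, hnhds⟩ := hyp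
  rw [mem_nhdsWithin] at hnhds
  obtain ⟨U, hUopen, hY₀U, hsub⟩ := hnhds
  haveI : CompactSpace (Chabauty M) := chab_compactSpace
  have hYcpt : IsCompact Y := hclosed.isCompact
  -- every member of the family can be translated into `U`
  have key : ∀ A ∈ Y, ∃ γ : Γ, chabSMul hact γ A ∈ U := by
    intro A hA
    have hcl : Y₀ ∈ closure {B : Chabauty M | ∃ γ : Γ, B.1 = γ • A.1} := hmin A hA hY₀
    obtain ⟨B, hBU, γ, hBeq⟩ := mem_closure_iff.1 hcl U hUopen hY₀U
    refine ⟨γ, ?_⟩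
    have : chabSMul hact γ A = B := Subtype.ext hBeq.symm
    rwa [this]
  choose γsel hγsel using key
  -- preimage cover of `Y`
  set V : Y → Set (Chabauty M) := fun i => (chabSMul hact (γsel i i.2)) ⁻¹' U with hV
  have hVopen : ∀ i : Y, IsOpen (V i) :=
    fun i => hUopen.preimage (chabSMul_continuous hact _)
  have hcover : Y ⊆ ⋃ i : Y, V i := fun A hA =>
    mem_iUnion.2 ⟨⟨A, hA⟩, hγsel A hA⟩
  obtain ⟨t, ht⟩ := hYcpt.elim_finite_subcover V hVopen hcover
  -- the compact set containing everything
  set L : Set M := ⋃ i ∈ t, (γsel i.1 i.2)⁻¹ • K with hL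
  have hLcpt : IsCompact L := by
    refine t.isCompact_biUnion fun i _ => ?_
    rw [show (γsel i.1 i.2)⁻¹ • K = (fun x => (γsel i.1 i.2)⁻¹ • x) '' K from
      (Set.image_smul).symm]
    exact hK.image (hact _)
  have hsubL : (⋃ A ∈ Y, A.1) ⊆ L := by
    intro x hx
    obtain ⟨A, hA, hxA⟩ := mem_iUnion₂.1 hx
    obtain ⟨i, hit, hAV⟩ := mem_iUnion₂.1 (ht hA)
    set γ := γsel i.1 i.2
    have hBmem : chabSMul hact γ A ∈ Y := by
      have := hinv γ A hA (chabSMul hact γ A).2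
      exact this
    have hBK : (chabSMul hact γ A).1 ⊆ K := (hsub ⟨hAV, hBmem⟩).2
    have : γ • x ∈ K := hBK ⟨x, hxA, rfl⟩
    refine mem_biUnion hit ?_
    rw [mem_smul_set_iff_inv_smul_mem, inv_inv]
    exact this
  exact hLcpt.of_isClosed_subset isClosed_closure
    (closure_minimal hsubL hLcpt.isClosed)
end

section
/- Let Γ be a group acting by homeomorphisms on a locally compact Hausdorff space M, and let 𝒴 ⊆ 2^M be a minimal closed Γ-invariant subset of the Chabauty space consisting of compact sets. Then either every element of 𝒴 has infinitely many connected components, or all elements of 𝒴 have the same finite number of connected components. -/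
open Set Filter Topology

/-- A homeomorphism induces an equivalence of connected components. -/
noncomputable def homeoCC {X Y : Type*} [TopologicalSpace X] [TopologicalSpace Y]
    (e : X ≃ₜ Y) : ConnectedComponents X ≃ ConnectedComponents Y where
  toFun := e.continuous.connectedComponentsMap
  invFun := e.symm.continuous.connectedComponentsMap
  left_inv := by
    refine ConnectedComponents.surjective_coe.forall.2 fun x => ?_
    simp only [Continuous.connectedComponentsMap,
      Continuous.connectedComponentsLift_apply_coe, Function.comp_apply,
      Homeomorph.symm_apply_apply]
  right_inv := by
    refine ConnectedComponents.surjective_coe.forall.2 fun y => ?_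
    simp only [Continuous.connectedComponentsMap,
      Continuous.connectedComponentsLift_apply_coe, Function.comp_apply,
      Homeomorph.apply_symm_apply]

theorem exists_clopen_pairwise {Q : Type*} [TopologicalSpace Q] [TotallySeparatedSpace Q]
    {m : ℕ} (φ : Fin m → Q) (hφ : Function.Injective φ) :
    ∃ V : Fin m → Set Q, (∀ i, IsClopen (V i)) ∧
      (∀ i j, i ≠ j → Disjoint (V i) (V j)) ∧ ∀ i, φ i ∈ V i := by
  classical
  have key : ∀ i j : Fin m, i ≠ j → ∃ C : Set Q, IsClopen C ∧ φ i ∈ C ∧ φ j ∉ C := by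
    intro i j hij
    obtain ⟨C, hC, h1, h2⟩ := exists_isClopen_of_totally_separated (hφ.ne hij)
    exact ⟨C, hC, h1, h2⟩
  choose C hCclopen hCmem hCnot using key
  set E : Fin m → Fin m → Set Q := fun i j =>
    if h : i ≠ j then C i j h \ C j i h.symm else univ with hE
  have hEclopen : ∀ i j, IsClopen (E i j) := by
    intro i j
    by_cases h : i ≠ j
    · simp only [hE, dif_pos h]; exact (hCclopen i j h).diff (hCclopen j i h.symm)
    · simp only [hE, dif_neg h]; exact isClopen_univ
  have hEmem : ∀ i j, φ i ∈ E i j := by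
    intro i j
    by_cases h : i ≠ j
    · simp only [hE, dif_pos h]; exact ⟨hCmem i j h, hCnot j i h.symm⟩
    · simp only [hE, dif_neg h]; trivial
  have hEdisj : ∀ i j (h : i ≠ j), Disjoint (E i j) (E j i) := by
    intro i j h
    simp only [hE, dif_pos h, dif_pos h.symm]
    rw [Set.disjoint_left]
    rintro x ⟨hx1, hx2⟩ ⟨hx3, _⟩
    exact hx2 hx3
  refine ⟨fun i => ⋂ j, E i j, fun i =>
      ⟨isClosed_iInter fun j => (hEclopen i j).1, isOpen_iInter_of_finite fun j => (hEclopen i j).2⟩,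
      fun i j h => ?_, fun i => mem_iInter.2 fun j => hEmem i j⟩
  exact (hEdisj i j h).mono (iInter_subset _ j) (iInter_subset _ i)

theorem key_lemma {M : Type*} [TopologicalSpace M] [LocallyCompactSpace M] [T2Space M]
    (A : Chabauty M) (hA : IsCompact A.1) (m : ℕ)
    (φ : Fin m → ConnectedComponents A.1) (hφ : Function.Injective φ) :
    ∃ N : Set (Chabauty M), IsOpen N ∧ A ∈ N ∧
      ∀ B ∈ N, ∃ g : Fin m → ConnectedComponents B.1, Function.Injective g := by
  classical
  haveI : CompactSpace A.1 := isCompact_iff_compactSpace.mp hA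
  haveI : CompactSpace (ConnectedComponents A.1) :=
    ⟨by rw [← ConnectedComponents.range_coe]
        exact isCompact_range ConnectedComponents.continuous_coe⟩
  obtain ⟨V, hVclopen, hVdisj, hVmem⟩ := exists_clopen_pairwise φ hφ
  set K : Option (Fin m) → Set M := fun o =>
    Option.casesOn o
      (Subtype.val '' ((ConnectedComponents.mk ⁻¹' ⋃ i, V i)ᶜ))
      (fun i => Subtype.val '' (ConnectedComponents.mk ⁻¹' V i)) with hKdef
  have himg : ∀ s : Set (ConnectedComponents A.1), IsClopen s →
      IsCompact (Subtype.val '' (ConnectedComponents.mk ⁻¹' s) : Set M) := fun s hs =>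
    ((hs.preimage ConnectedComponents.continuous_coe).1.isCompact).image continuous_subtype_val
  have hKcpt : ∀ o, IsCompact (K o) := by
    rintro (_ | i)
    · have hcl : IsClopen (⋃ i, V i) :=
        ⟨isClosed_iUnion_of_finite fun i => (hVclopen i).1,
          isOpen_iUnion fun i => (hVclopen i).2⟩
      exact himg _ hcl.compl
    · exact himg _ (hVclopen i)
  have hKsub : ∀ o, K o ⊆ A.1 := by
    rintro (_ | i) <;> exact Subtype.coe_image_subset _ _
  have hKunion : ⋃ o, K o = A.1 := by
    apply subset_antisymm (iUnion_subset hKsub)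
    intro a ha
    by_cases h : ConnectedComponents.mk (⟨a, ha⟩ : A.1) ∈ ⋃ i, V i
    · rcases mem_iUnion.1 h with ⟨i, hi⟩
      exact mem_iUnion.2 ⟨some i, ⟨⟨a, ha⟩, hi, rfl⟩⟩
    · exact mem_iUnion.2 ⟨none, ⟨⟨a, ha⟩, h, rfl⟩⟩
  have hKdisj : ∀ o o' : Option (Fin m), o ≠ o' → Disjoint (K o) (K o') := by
    have hpre : ∀ s t : Set (ConnectedComponents A.1), Disjoint s t →
        Disjoint (Subtype.val '' (ConnectedComponents.mk ⁻¹' s) : Set M)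
          (Subtype.val '' (ConnectedComponents.mk ⁻¹' t)) := fun s t h =>
      (Set.disjoint_image_iff Subtype.val_injective).2
        (h.preimage ConnectedComponents.mk)
    rintro (_ | i) (_ | j) h
    · exact absurd rfl h
    · exact hpre _ _ (disjoint_compl_left.mono_right (subset_iUnion V j))
    · exact hpre _ _ (disjoint_compl_right.mono_left (subset_iUnion V i))
    · exact hpre _ _ (hVdisj i j (by simpa using h))
  have hsep : ∀ o o' : Option (Fin m), o ≠ o' →
      ∃ U U' : Set M, IsOpen U ∧ IsOpen U' ∧ K o ⊆ U ∧ K o' ⊆ U' ∧ Disjoint U U' :=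
    fun o o' h => SeparatedNhds.of_isCompact_isCompact (hKcpt o) (hKcpt o') (hKdisj o o' h)
  choose u v hu hv hKu hKv huv using hsep
  set O : Option (Fin m) → Set M := fun o =>
    ⋂ o', if h : o ≠ o' then u o o' h ∩ v o' o h.symm else univ with hOdef
  have hOopen : ∀ o, IsOpen (O o) := fun o => isOpen_iInter_of_finite fun o' => by
    by_cases h : o ≠ o'
    · rw [dif_pos h]; exact (hu o o' h).inter (hv o' o h.symm)
    · rw [dif_neg h]; exact isOpen_univ
  have hKO : ∀ o, K o ⊆ O o := fun o => subset_iInter fun o' => by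
    by_cases h : o ≠ o'
    · rw [dif_pos h]; exact subset_inter (hKu o o' h) (hKv o' o h.symm)
    · rw [dif_neg h]; exact subset_univ _
  have hOdisj : ∀ o o', o ≠ o' → Disjoint (O o) (O o') := by
    intro o o' h
    have h1 : O o ⊆ u o o' h := (iInter_subset _ o').trans (by rw [dif_pos h]; exact inter_subset_left)
    have h2 : O o' ⊆ v o o' h := (iInter_subset _ o).trans (by rw [dif_pos h.symm]; exact inter_subset_right)
    exact (huv o o' h).mono h1 h2
  have hshrink : ∀ o, ∃ Wo : Set M, IsOpen Wo ∧ K o ⊆ Wo ∧ closure Wo ⊆ O o ∧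
      IsCompact (closure Wo) := fun o =>
    exists_open_between_and_isCompact_closure (hKcpt o) (hOopen o) (hKO o)
  choose W hWopen hKW hWclO hWcpt using hshrink
  have hWdisj : ∀ o o', o ≠ o' → Disjoint (closure (W o)) (closure (W o')) :=
    fun o o' h => (hOdisj o o' h).mono (hWclO o) (hWclO o')
  set L : Set M := ⋃ o, closure (W o) \ W o with hLdef
  have hLcpt : IsCompact L := isCompact_iUnion fun o => (hWcpt o).diff (hWopen o)
  refine ⟨{B : Chabauty M | (∀ i : Fin m, (B.1 ∩ W (some i)).Nonempty) ∧ B.1 ∩ L = ∅},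
    ?_, ⟨?_, ?_⟩, ?_⟩
  · have heq : {B : Chabauty M | (∀ i : Fin m, (B.1 ∩ W (some i)).Nonempty) ∧ B.1 ∩ L = ∅}
        = (⋂ i : Fin m, {B : Chabauty M | (B.1 ∩ W (some i)).Nonempty}) ∩
          {B : Chabauty M | B.1 ∩ L = ∅} := by
      ext B; simp [mem_iInter]
    rw [heq]
    refine IsOpen.inter (isOpen_iInter_of_finite fun i => ?_) ?_
    · exact TopologicalSpace.isOpen_generateFrom_of_mem
        (Or.inl ⟨W (some i), hWopen _, rfl⟩)
    · exact TopologicalSpace.isOpen_generateFrom_of_mem (Or.inr ⟨L, hLcpt, rfl⟩)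
  · intro i
    obtain ⟨x, hx⟩ := ConnectedComponents.surjective_coe (φ i)
    exact ⟨x, x.2, hKW (some i) ⟨x, show ConnectedComponents.mk x ∈ V i from hx ▸ hVmem i, rfl⟩⟩
  · rw [eq_empty_iff_forall_notMem]
    rintro a ⟨haA, haL⟩
    rcases mem_iUnion.1 (hKunion ▸ haA : a ∈ ⋃ o, K o) with ⟨o, hao⟩
    rcases mem_iUnion.1 haL with ⟨o', hao'⟩
    by_cases h : o = o'
    · exact hao'.2 (h ▸ hKW o hao)
    · exact (hWdisj o o' h).ne_of_mem (subset_closure (hKW o hao)) hao'.1 rfl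
  · rintro B ⟨hBhit, hBmiss⟩
    choose b hb using hBhit
    have hclopen : ∀ o : Option (Fin m), IsClopen (Subtype.val ⁻¹' W o : Set B.1) := by
      intro o
      constructor
      · have : (Subtype.val ⁻¹' W o : Set B.1) = Subtype.val ⁻¹' closure (W o) := by
          apply subset_antisymm (preimage_mono subset_closure)
          intro x hx
          by_contra hxW
          have hmem : (x : M) ∈ B.1 ∩ L := ⟨x.2, mem_iUnion.2 ⟨o, hx, hxW⟩⟩
          rw [hBmiss] at hmem
          exact hmem
        rw [this]
        exact isClosed_closure.preimage continuous_subtype_val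
      · exact (hWopen o).preimage continuous_subtype_val
    refine ⟨fun i => ConnectedComponents.mk (⟨b i, (hb i).1⟩ : B.1), fun i j hij => ?_⟩
    by_contra hne
    have hcc : connectedComponent (⟨b i, (hb i).1⟩ : B.1)
        = connectedComponent (⟨b j, (hb j).1⟩ : B.1) := Quotient.eq''.1 hij
    have h1 : (⟨b j, (hb j).1⟩ : B.1) ∈ connectedComponent (⟨b i, (hb i).1⟩ : B.1) := by
      rw [hcc]; exact mem_connectedComponent
    have h2 : (⟨b j, (hb j).1⟩ : B.1) ∈ (Subtype.val ⁻¹' W (some i) : Set B.1) :=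
      (hclopen (some i)).connectedComponent_subset (hb i).2 h1
    have hdisj : Disjoint (W (some i)) (W (some j)) :=
      (hWdisj _ _ (by simpa using hne)).mono subset_closure subset_closure
    exact hdisj.ne_of_mem h2 (hb j).2 rfl

open Pointwise

/-- In a minimal closed invariant family of compact closed subsets, either all
members have infinitely many connected components, or they all have the same
finite number of connected components. -/
theorem stmt_12 {M Γ : Type*} [TopologicalSpace M] [LocallyCompactSpace M] [T2Space M]
    [Group Γ] [MulAction Γ M] (hact : ∀ γ : Γ, Continuous fun x : M => γ • x)
    (Y : Set (Chabauty M)) (hne : Y.Nonempty) (hclosed : IsClosed Y)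
    (hcpt : ∀ A ∈ Y, IsCompact A.1)
    (hinv : ∀ γ : Γ, ∀ A ∈ Y, ∀ h : IsClosed (γ • A.1), (⟨γ • A.1, h⟩ : Chabauty M) ∈ Y)
    (hmin : ∀ A ∈ Y, Y ⊆ closure {B : Chabauty M | ∃ γ : Γ, B.1 = γ • A.1}) :
    (∀ A ∈ Y, Infinite (ConnectedComponents A.1)) ∨
    (∃ n : ℕ, ∀ A ∈ Y, Nonempty (ConnectedComponents A.1 ≃ Fin n)) := by
  classical
  haveI : ContinuousConstSMul Γ M := ⟨hact⟩
  by_cases hInf : ∀ A ∈ Y, Infinite (ConnectedComponents A.1)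
  · exact Or.inl hInf
  push_neg at hInf
  obtain ⟨A₀, hA₀Y, hA₀fin⟩ := hInf
  haveI hfin₀ : Finite (ConnectedComponents A₀.1) := hA₀fin
  set S : Set ℕ := {k | ∃ A ∈ Y, Nonempty (ConnectedComponents A.1 ≃ Fin k)} with hS
  have hSne : S.Nonempty := by
    obtain ⟨k, hk⟩ := Finite.exists_equiv_fin (ConnectedComponents A₀.1)
    exact ⟨k, A₀, hA₀Y, hk⟩
  set n : ℕ := sInf S with hn
  obtain ⟨A₁, hA₁Y, ⟨e₁⟩⟩ : n ∈ S := Nat.sInf_mem hSne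
  refine Or.inr ⟨n, fun B hB => ?_⟩
  -- no injection of Fin (n+1) into components of B
  have hBle : ¬ ∃ f : Fin (n + 1) → ConnectedComponents B.1, Function.Injective f := by
    rintro ⟨f, hf⟩
    obtain ⟨N, hNopen, hBN, hNprop⟩ := key_lemma B (hcpt B hB) (n + 1) f hf
    have hBcl : B ∈ closure {C : Chabauty M | ∃ γ : Γ, C.1 = γ • A₁.1} := hmin A₁ hA₁Y hB
    obtain ⟨C, hCN, γ, hCγ⟩ := _root_.mem_closure_iff.1 hBcl N hNopen hBN
    obtain ⟨g, hg⟩ := hNprop C hCN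
    -- components of C are equivalent to components of A₁
    have himg : (⇑(Homeomorph.smul γ : M ≃ₜ M)) '' A₁.1 = γ • A₁.1 := by
      ext x; simp [Set.mem_smul_set]
    have e₂ : ConnectedComponents C.1 ≃ ConnectedComponents A₁.1 :=
      homeoCC ((Homeomorph.setCongr hCγ).trans
        ((Homeomorph.setCongr himg).symm.trans ((Homeomorph.smul γ).image A₁.1).symm))
    have hinj : Function.Injective (e₁ ∘ e₂ ∘ g) :=
      e₁.injective.comp (e₂.injective.comp hg)
    have := Fintype.card_le_of_injective _ hinj
    simp at this
  haveI hBfin : Finite (ConnectedComponents B.1) := by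
    by_contra h
    haveI : Infinite (ConnectedComponents B.1) := not_finite_iff_infinite.mp h
    exact hBle ⟨_, (Fin.valEmbedding.trans (Infinite.natEmbedding _)).injective⟩
  obtain ⟨k, ⟨e⟩⟩ := Finite.exists_equiv_fin (ConnectedComponents B.1)
  have hnk : n ≤ k := Nat.sInf_le ⟨B, hB, ⟨e⟩⟩
  have hkn : k ≤ n := by
    by_contra h
    push_neg at h
    exact hBle ⟨e.symm ∘ Fin.castLE h, (e.symm.injective.comp (Fin.castLE_injective h))⟩
  exact ⟨e.trans (finCongr (le_antisymm hkn hnk))⟩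
end

section
/- Let Γ be a group acting by homeomorphisms on a locally compact Hausdorff space M that admits a partition into compact open subsets, and let 𝒴 ⊆ 2^M be a minimal closed Γ-invariant subset consisting of compact sets. Then the union of all members of 𝒴 has compact closure in M. -/
open Set Filter Topology

open Pointwise

namespace ChabautyAux

variable {M : Type*} [TopologicalSpace M]

/-- The defining subbasis of the Chabauty topology. -/
def sub (M : Type*) [TopologicalSpace M] : Set (Set (Chabauty M)) :=
  {S | ∃ U : Set M, IsOpen U ∧ S = {A : Chabauty M | (A.1 ∩ U).Nonempty}} ∪
  {S | ∃ K : Set M, IsCompact K ∧ S = {A : Chabauty M | A.1 ∩ K = ∅}}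

lemma isOpen_of_mem_sub {s : Set (Chabauty M)} (hs : s ∈ sub M) : IsOpen s :=
  TopologicalSpace.GenerateOpen.basic s hs

lemma isOpen_hit {U : Set M} (hU : IsOpen U) :
    IsOpen {A : Chabauty M | (A.1 ∩ U).Nonempty} :=
  isOpen_of_mem_sub (Or.inl ⟨U, hU, rfl⟩)

lemma isOpen_miss {K : Set M} (hK : IsCompact K) :
    IsOpen {A : Chabauty M | A.1 ∩ K = ∅} :=
  isOpen_of_mem_sub (Or.inr ⟨K, hK, rfl⟩)

lemma compl_hit (U : Set M) :
    {A : Chabauty M | (A.1 ∩ U).Nonempty}ᶜ = {A : Chabauty M | A.1 ∩ U = ∅} := by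
  ext A
  simp [not_nonempty_iff_eq_empty]

lemma isClosed_hit {K : Set M} (hK : IsCompact K) :
    IsClosed {A : Chabauty M | (A.1 ∩ K).Nonempty} := by
  rw [← isOpen_compl_iff, compl_hit]
  exact isOpen_miss hK

/-- Induction principle for open sets of the Chabauty topology. -/
lemma isOpen_induction {s : Set (Chabauty M)} (hs : IsOpen s)
    {p : Set (Chabauty M) → Prop}
    (hbasic : ∀ t ∈ sub M, p t) (huniv : p univ)
    (hinter : ∀ t u, p t → p u → p (t ∩ u))
    (hsup : ∀ T : Set (Set (Chabauty M)), (∀ t ∈ T, p t) → p (⋃₀ T)) : p s := by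
  have h : TopologicalSpace.GenerateOpen (sub M) s := hs
  clear hs
  induction h with
  | basic t ht => exact hbasic t ht
  | univ => exact huniv
  | inter t u _ _ iht ihu => exact hinter t u iht ihu
  | sUnion T _ ih => exact hsup T ih

/-- The Chabauty space is compact. -/
lemma isCompact_univ : IsCompact (univ : Set (Chabauty M)) := by
  rw [isCompact_iff_ultrafilter_le_nhds]
  intro f _
  classical
  set As : Set M := {x : M | ∀ U : Set M, IsOpen U → x ∈ U →
      {B : Chabauty M | (B.1 ∩ U).Nonempty} ∈ f} with hAs
  have hAclosed : IsClosed As := by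
    rw [← isOpen_compl_iff, isOpen_iff_forall_mem_open]
    intro x hx
    simp only [hAs, mem_compl_iff, mem_setOf_eq, not_forall] at hx
    obtain ⟨U, hU, hxU, hUf⟩ := hx
    exact ⟨U, fun y hy hyA => hUf (hyA U hU hy), hU, hxU⟩
  refine ⟨⟨As, hAclosed⟩, mem_univ _, le_nhds_iff.2 ?_⟩
  intro s hmem hs
  revert hmem
  refine isOpen_induction (p := fun t => (⟨As, hAclosed⟩ : Chabauty M) ∈ t → t ∈ (f : Filter (Chabauty M))) hs ?_ (fun _ => univ_mem) ?_ ?_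
  · rintro t (⟨U, hU, rfl⟩ | ⟨K, hK, rfl⟩) hmem
    · obtain ⟨x, hxA, hxU⟩ := hmem
      exact hxA U hU hxU
    · have hmem' : As ∩ K = ∅ := hmem
      have hx : ∀ x : K, ∃ U : Set M, IsOpen U ∧ (x : M) ∈ U ∧
          {B : Chabauty M | B.1 ∩ U = ∅} ∈ f := by
        rintro ⟨x, hxK⟩
        have hxA : x ∉ As := by
          intro hxA
          have : x ∈ As ∩ K := ⟨hxA, hxK⟩
          rw [hmem'] at this
          exact this
        simp only [hAs, mem_setOf_eq, not_forall] at hxA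
        obtain ⟨U, hU, hxU, hUf⟩ := hxA
        refine ⟨U, hU, hxU, ?_⟩
        rw [← compl_hit U]
        exact (Ultrafilter.compl_mem_iff_notMem).2 hUf
      choose U hUo hxU hUf using hx
      have hcov : K ⊆ ⋃ x : K, U x := fun y hy => mem_iUnion.2 ⟨⟨y, hy⟩, hxU ⟨y, hy⟩⟩
      obtain ⟨t, ht⟩ := hK.elim_finite_subcover U hUo hcov
      refine mem_of_superset ((Filter.biInter_finset_mem t).2 fun x _ => hUf x) ?_
      intro B hB
      simp only [mem_iInter, mem_setOf_eq] at hB ⊢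
      rw [eq_empty_iff_forall_notMem]
      rintro y ⟨hyB, hyK⟩
      obtain ⟨x, hxt, hyU⟩ := by
        have := ht hyK
        simpa only [mem_iUnion, exists_prop] using this
      have : y ∈ B.1 ∩ U x := ⟨hyB, hyU⟩
      rw [hB x hxt] at this
      exact this
  · intro t u iht ihu hmem
    exact inter_mem (iht hmem.1) (ihu hmem.2)
  · intro T ih hmem
    obtain ⟨t, htT, hxt⟩ := hmem
    exact mem_of_superset (ih t htT hxt) (subset_sUnion_of_mem htT)

/-- Criterion for continuity of a map into the Chabauty space. -/
lemma continuous_into {X : Type*} [TopologicalSpace X] {g : X → Chabauty M}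
    (h : ∀ s ∈ sub M, IsOpen (g ⁻¹' s)) : Continuous g := by
  rw [continuous_def]
  intro s hs
  refine isOpen_induction (p := fun t => IsOpen (g ⁻¹' t)) hs h (by simpa using isOpen_univ) ?_ ?_
  · intro t u iht ihu
    rw [preimage_inter]
    exact iht.inter ihu
  · intro T ih
    rw [preimage_sUnion]
    exact isOpen_biUnion ih

section Group

variable {Γ : Type*} [Group Γ] [MulAction Γ M]

lemma smul_isClosed (hact : ∀ γ : Γ, Continuous fun x : M => γ • x)
    (γ : Γ) {s : Set M} (hs : IsClosed s) : IsClosed (γ • s) := by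
  have h : IsClosed ((fun x : M => γ⁻¹ • x) ⁻¹' s) := hs.preimage (hact γ⁻¹)
  convert h using 1
  ext x
  simp [Set.mem_smul_set_iff_inv_smul_mem]

/-- The induced action on the Chabauty space. -/
noncomputable def smulC (hact : ∀ γ : Γ, Continuous fun x : M => γ • x) (γ : Γ)
    (A : Chabauty M) : Chabauty M :=
  ⟨γ • A.1, smul_isClosed hact γ A.2⟩

lemma smul_inter_nonempty (γ : Γ) (s t : Set M) :
    ((γ • s) ∩ t).Nonempty ↔ (s ∩ γ⁻¹ • t).Nonempty := by
  constructor
  · rintro ⟨y, hy1, hy2⟩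
    obtain ⟨x, hx, rfl⟩ := hy1
    exact ⟨x, hx, by rwa [Set.mem_smul_set_iff_inv_smul_mem, inv_inv]⟩
  · rintro ⟨x, hx1, hx2⟩
    rw [Set.mem_smul_set_iff_inv_smul_mem, inv_inv] at hx2
    exact ⟨γ • x, Set.smul_mem_smul_set hx1, hx2⟩

lemma smul_set_eq_preimage (γ : Γ) (t : Set M) :
    γ⁻¹ • t = (fun x : M => γ • x) ⁻¹' t := by
  ext x
  rw [Set.mem_smul_set_iff_inv_smul_mem, inv_inv]
  rfl

lemma continuous_smulC (hact : ∀ γ : Γ, Continuous fun x : M => γ • x) (γ : Γ) :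
    Continuous (smulC (M := M) hact γ) := by
  apply continuous_into
  rintro s (⟨U, hU, rfl⟩ | ⟨K, hK, rfl⟩)
  · have heq : smulC hact γ ⁻¹' {A : Chabauty M | (A.1 ∩ U).Nonempty}
        = {A : Chabauty M | (A.1 ∩ γ⁻¹ • U).Nonempty} := by
      ext A
      simp only [mem_preimage, mem_setOf_eq, smulC]
      exact smul_inter_nonempty γ A.1 U
    rw [heq]
    refine isOpen_hit ?_
    rw [smul_set_eq_preimage]
    exact hU.preimage (hact γ)
  · have heq : smulC hact γ ⁻¹' {A : Chabauty M | A.1 ∩ K = ∅}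
        = {A : Chabauty M | A.1 ∩ γ⁻¹ • K = ∅} := by
      ext A
      simp only [mem_preimage, mem_setOf_eq, smulC, ← not_nonempty_iff_eq_empty]
      exact not_congr (smul_inter_nonempty γ A.1 K)
    rw [heq]
    refine isOpen_miss ?_
    have : γ⁻¹ • K = (fun x : M => γ⁻¹ • x) '' K := by
      simp [Set.image_smul]
    rw [this]
    exact hK.image (hact γ⁻¹)

end Group

end ChabautyAux

/-- If `M` admits a partition into compact open subsets, then the union of any
minimal closed invariant family of compact closed subsets has compact
closure. -/
theorem stmt_13 {M Γ : Type*} [TopologicalSpace M] [LocallyCompactSpace M] [T2Space M]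
    [Group Γ] [MulAction Γ M] (hact : ∀ γ : Γ, Continuous fun x : M => γ • x)
    (Pa : Set (Set M)) (hPcpt : ∀ P ∈ Pa, IsCompact P) (hPopen : ∀ P ∈ Pa, IsOpen P)
    (hPdisj : Pa.PairwiseDisjoint id) (hPcover : ⋃₀ Pa = Set.univ)
    (Y : Set (Chabauty M)) (hne : Y.Nonempty) (hclosed : IsClosed Y)
    (hcpt : ∀ A ∈ Y, IsCompact A.1)
    (hinv : ∀ γ : Γ, ∀ A ∈ Y, ∀ h : IsClosed (γ • A.1), (⟨γ • A.1, h⟩ : Chabauty M) ∈ Y)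
    (hmin : ∀ A ∈ Y, Y ⊆ closure {B : Chabauty M | ∃ γ : Γ, B.1 = γ • A.1}) :
    IsCompact (closure (⋃ A ∈ Y, A.1)) := by
  classical
  open ChabautyAux in
  -- every point lies in a unique piece
  have hpiece : ∀ x : M, ∃ Q ∈ Pa, x ∈ Q := by
    intro x
    have : x ∈ ⋃₀ Pa := by rw [hPcover]; exact mem_univ x
    exact this
  have hunique : ∀ Q ∈ Pa, ∀ P ∈ Pa, ∀ x : M, x ∈ Q → x ∈ P → Q = P := by
    intro Q hQ P hP x hxQ hxP
    by_contra hne'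
    exact Set.disjoint_left.1 (hPdisj hQ hP hne') hxQ hxP
  by_cases hfin : ∃ t : Finset (Set M), ↑t ⊆ Pa ∧ ∀ A ∈ Y, A.1 ⊆ ⋃ Q ∈ t, Q
  · -- bounded case: the union lies in a finite union of compact pieces
    obtain ⟨t, htPa, ht⟩ := hfin
    have hUc : IsCompact (⋃ Q ∈ t, (Q : Set M)) :=
      t.finite_toSet.isCompact_biUnion fun Q hQ => hPcpt Q (htPa hQ)
    have hUcl : IsClosed (⋃ Q ∈ t, (Q : Set M)) :=
      t.finite_toSet.isClosed_biUnion fun Q hQ => (hPcpt Q (htPa hQ)).isClosed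
    have hsub : (⋃ A ∈ Y, A.1) ⊆ ⋃ Q ∈ t, (Q : Set M) := by
      intro x hx
      obtain ⟨A, hA, hxA⟩ := by simpa only [mem_iUnion, exists_prop] using hx
      exact ht A hA hxA
    exact hUc.of_isClosed_subset isClosed_closure (closure_minimal hsub hUcl)
  · -- unbounded case: derive a contradiction
    exfalso
    push_neg at hfin
    -- every compact set is missed by the "escaping part" of some element of Y
    have hescape : ∀ C : Set M, IsCompact C → ∃ A ∈ Y, ¬A.1 ⊆ C := by
      intro C hC
      have hcov : C ⊆ ⋃ P : Pa, (P : Set M) := by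
        intro x _
        obtain ⟨Q, hQ, hxQ⟩ := hpiece x
        exact mem_iUnion.2 ⟨⟨Q, hQ⟩, hxQ⟩
      obtain ⟨t, ht⟩ := hC.elim_finite_subcover (fun P : Pa => (P : Set M))
        (fun P => hPopen P P.2) hcov
      have htPa : ↑(t.image (Subtype.val : Pa → Set M)) ⊆ Pa := by
        intro Q hQ
        obtain ⟨P, _, rfl⟩ := Finset.mem_image.1 (by exact_mod_cast hQ)
        exact P.2
      obtain ⟨A, hA, hA'⟩ := hfin (t.image Subtype.val) htPa
      refine ⟨A, hA, fun hsub => hA' ?_⟩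
      intro x hx
      have hxC := hsub hx
      obtain ⟨P, hPt, hxP⟩ := by
        have := ht hxC
        simpa only [mem_iUnion, exists_prop] using this
      exact mem_biUnion (Finset.mem_image.2 ⟨P, hPt, rfl⟩) hxP
    -- the set Z of elements approximable by escaping elements
    set Z : Set (Chabauty M) :=
      ⋂ C : {C : Set M // IsCompact C},
        closure {A : Chabauty M | A ∈ Y ∧ ¬A.1 ⊆ (C : Set M)} with hZ
    have hZclosed : IsClosed Z := isClosed_iInter fun _ => isClosed_closure
    have hZY : Z ⊆ Y := by
      intro A hA
      have h1 : A ∈ closure {A : Chabauty M | A ∈ Y ∧ ¬A.1 ⊆ (∅ : Set M)} :=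
        mem_iInter.1 hA ⟨∅, isCompact_empty⟩
      have h2 : closure {A : Chabauty M | A ∈ Y ∧ ¬A.1 ⊆ (∅ : Set M)} ⊆ Y :=
        closure_minimal (fun B hB => hB.1) hclosed
      exact h2 h1
    haveI : Nonempty {C : Set M // IsCompact C} := ⟨⟨∅, isCompact_empty⟩⟩
    have hZne : Z.Nonempty := by
      rw [hZ]
      refine IsCompact.nonempty_iInter_of_directed_nonempty_isCompact_isClosed
        (ι := {C : Set M // IsCompact C}) _ ?_ ?_ ?_ (fun _ => isClosed_closure)
      · rintro ⟨C₁, hC₁⟩ ⟨C₂, hC₂⟩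
        refine ⟨⟨C₁ ∪ C₂, hC₁.union hC₂⟩, ?_, ?_⟩ <;>
        · apply closure_mono
          rintro A ⟨hAY, hA⟩
          exact ⟨hAY, fun hsub => hA (hsub.trans (by simp))⟩
      · rintro ⟨C, hC⟩
        obtain ⟨A, hA, hA'⟩ := hescape C hC
        exact ⟨A, subset_closure ⟨hA, hA'⟩⟩
      · rintro ⟨C, hC⟩
        exact ChabautyAux.isCompact_univ.of_isClosed_subset isClosed_closure (subset_univ _)
    -- Z is invariant
    have hZinv : ∀ (γ : Γ) (A : Chabauty M), A ∈ Z → ChabautyAux.smulC hact γ A ∈ Z := by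
      intro γ A hA
      rw [hZ, mem_iInter] at hA ⊢
      rintro ⟨C, hC⟩
      have hC' : IsCompact (γ⁻¹ • C) := by
        have : γ⁻¹ • C = (fun x : M => γ⁻¹ • x) '' C := by simp [Set.image_smul]
        rw [this]
        exact hC.image (hact γ⁻¹)
      have h1 : A ∈ closure {B : Chabauty M | B ∈ Y ∧ ¬B.1 ⊆ γ⁻¹ • C} := hA ⟨_, hC'⟩
      have h2 : ChabautyAux.smulC hact γ A ∈
          ChabautyAux.smulC hact γ '' closure {B : Chabauty M | B ∈ Y ∧ ¬B.1 ⊆ γ⁻¹ • C} :=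
        mem_image_of_mem _ h1
      have h3 := image_closure_subset_closure_image
        (ChabautyAux.continuous_smulC hact γ)
        (s := {B : Chabauty M | B ∈ Y ∧ ¬B.1 ⊆ γ⁻¹ • C}) h2
      refine closure_mono ?_ h3
      rintro B' ⟨B, ⟨hBY, hBn⟩, rfl⟩
      constructor
      · exact hinv γ B hBY _
      · intro hsub
        apply hBn
        intro x hx
        have hgx : γ • x ∈ C := hsub (Set.smul_mem_smul_set hx)
        rwa [Set.mem_smul_set_iff_inv_smul_mem, inv_inv]
    -- by minimality, Y ⊆ Z
    obtain ⟨A₀, hA₀Z⟩ := hZne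
    have hA₀Y : A₀ ∈ Y := hZY hA₀Z
    have hYZ : Y ⊆ Z := by
      intro B hB
      have horb : {B : Chabauty M | ∃ γ : Γ, B.1 = γ • A₀.1} ⊆ Z := by
        rintro B' ⟨γ, hγ⟩
        have : B' = ChabautyAux.smulC hact γ A₀ := Subtype.ext hγ
        rw [this]
        exact hZinv γ A₀ hA₀Z
      exact closure_minimal horb hZclosed (hmin A₀ hA₀Y hB)
    -- key consequence: every element of Y is approximable by escaping elements
    have hYsub : ∀ C : Set M, IsCompact C →
        Y ⊆ closure {A : Chabauty M | A ∈ Y ∧ ¬A.1 ⊆ C} := by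
      intro C hC B hB
      exact mem_iInter.1 (hYZ hB) ⟨C, hC⟩
    -- inductive construction of finite families of pieces all hit by one element
    set Pp : Finset (Set M) → Prop := fun s => ↑s ⊆ Pa ∧
      (Y ∩ ⋂ Q ∈ s, {A : Chabauty M | (A.1 ∩ Q).Nonempty}).Nonempty with hPp
    have hbase : Pp ∅ := by
      refine ⟨by simp, ?_⟩
      simpa using hne
    have hstep : ∀ s : Finset (Set M), Pp s → ∃ Q', Q' ∈ Pa ∧ Q' ∉ s ∧ Pp (insert Q' s) := by
      rintro s ⟨hsPa, B, hBY, hBV⟩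
      have hCcpt : IsCompact (⋃ Q ∈ s, (Q : Set M)) :=
        s.finite_toSet.isCompact_biUnion fun Q hQ => hPcpt Q (hsPa hQ)
      have hVopen : IsOpen (⋂ Q ∈ s, {A : Chabauty M | (A.1 ∩ Q).Nonempty}) :=
        s.finite_toSet.isOpen_biInter fun Q hQ => ChabautyAux.isOpen_hit (hPopen Q (hsPa hQ))
      have hBcl : B ∈ closure {A : Chabauty M | A ∈ Y ∧ ¬A.1 ⊆ ⋃ Q ∈ s, (Q : Set M)} :=
        hYsub _ hCcpt hBY
      obtain ⟨A, hAV, hAY, hAesc⟩ :=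
        mem_closure_iff.1 hBcl _ hVopen hBV
      obtain ⟨x, hxA, hxC⟩ := not_subset.1 hAesc
      obtain ⟨Q', hQ'Pa, hxQ'⟩ := hpiece x
      have hQ's : Q' ∉ s := by
        intro hQ's
        exact hxC (mem_biUnion hQ's hxQ')
      refine ⟨Q', hQ'Pa, hQ's, ?_, A, hAY, ?_⟩
      · intro Q hQ
        rcases Finset.mem_insert.1 (by exact_mod_cast hQ) with rfl | hQ
        · exact hQ'Pa
        · exact hsPa hQ
      · rw [mem_iInter₂]
        intro Q hQ
        rcases Finset.mem_insert.1 hQ with rfl | hQs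
        · exact ⟨x, hxA, hxQ'⟩
        · exact mem_iInter₂.1 hAV Q hQs
    choose Qf hQf1 hQf2 hQf3 using hstep
    -- the increasing chain of families of pieces
    let g : ℕ → {s : Finset (Set M) // Pp s} := fun n =>
      Nat.rec ⟨∅, hbase⟩ (fun _ p => ⟨insert (Qf p.1 p.2) p.1, hQf3 p.1 p.2⟩) n
    have hgsucc : ∀ n, (g (n + 1)).1 = insert (Qf (g n).1 (g n).2) (g n).1 := fun n => rfl
    have hgmono : ∀ n, (g n).1 ⊆ (g (n + 1)).1 := by
      intro n
      rw [hgsucc]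
      exact Finset.subset_insert _ _
    have hgcard : ∀ n, (g n).1.card = n := by
      intro n
      induction n with
      | zero => rfl
      | succ n ih =>
        rw [hgsucc, Finset.card_insert_of_notMem (hQf2 (g n).1 (g n).2), ih]
    -- the decreasing sequence of closed nonempty subsets of Y
    set F : ℕ → Set (Chabauty M) := fun n =>
      Y ∩ ⋂ Q ∈ (g n).1, {A : Chabauty M | (A.1 ∩ Q).Nonempty} with hF
    have hFcl : ∀ n, IsClosed (F n) := by
      intro n
      refine hclosed.inter (isClosed_biInter fun Q hQ => ?_)
      exact ChabautyAux.isClosed_hit (hPcpt Q ((g n).2.1 hQ))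
    have hFantitone : ∀ n, F (n + 1) ⊆ F n := by
      intro n
      refine inter_subset_inter_right Y ?_
      intro A hA
      rw [mem_iInter₂] at hA ⊢
      intro Q hQ
      exact hA Q (hgmono n hQ)
    have hFne : ∀ n, (F n).Nonempty := fun n => (g n).2.2
    obtain ⟨B, hB⟩ := IsCompact.nonempty_iInter_of_sequence_nonempty_isCompact_isClosed
      F hFantitone hFne
      (ChabautyAux.isCompact_univ.of_isClosed_subset (hFcl 0) (subset_univ _)) hFcl
    rw [mem_iInter] at hB
    have hBY : B ∈ Y := (hB 0).1
    -- B is compact, so covered by finitely many pieces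
    have hBcov : B.1 ⊆ ⋃ P : Pa, (P : Set M) := by
      intro x _
      obtain ⟨Q, hQ, hxQ⟩ := hpiece x
      exact mem_iUnion.2 ⟨⟨Q, hQ⟩, hxQ⟩
    obtain ⟨t, ht⟩ := (hcpt B hBY).elim_finite_subcover (fun P : Pa => (P : Set M))
      (fun P => hPopen P P.2) hBcov
    -- but B hits all the pieces of every g n, so g n injects into t
    have hgt : ∀ n, (g n).1 ⊆ t.image Subtype.val := by
      intro n Q hQ
      have hhit : (B.1 ∩ Q).Nonempty := mem_iInter₂.1 (hB n).2 Q hQ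
      obtain ⟨x, hxB, hxQ⟩ := hhit
      obtain ⟨P, hPt, hxP⟩ := by
        have := ht hxB
        simpa only [mem_iUnion, exists_prop] using this
      have hQP : Q = (P : Set M) := hunique Q ((g n).2.1 hQ) P P.2 x hxQ hxP
      exact Finset.mem_image.2 ⟨P, hPt, hQP.symm⟩
    have hcontr := Finset.card_le_card (hgt ((t.image Subtype.val).card + 1))
    have hcard' := hgcard ((t.image Subtype.val).card + 1)
    omega
end

section
/- Let G be a locally compact group such that the identity component G° has no nontrivial compact normal subgroup. Let V, W be compact subgroups of G such that V·G° and W·G° are open and G° normalizes both V and W. Then V and W are commensurate: V ∩ W has finite index in both V and W. -/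
open Set Pointwise

/-- If the identity component `G°` of a locally compact group has no
nontrivial compact normal subgroup, then any two compact subgroups `V`, `W`
with `V⬝G°`, `W⬝G°` open and normalized by `G°` are commensurate. -/
theorem stmt_18 {G : Type*} [Group G] [TopologicalSpace G] [IsTopologicalGroup G]
    [LocallyCompactSpace G] [T2Space G]
    (hW : ∀ N : Subgroup G, N ≤ Subgroup.connectedComponentOfOne G →
      IsCompact (N : Set G) →
      (∀ g ∈ Subgroup.connectedComponentOfOne G, ∀ x ∈ N, g * x * g⁻¹ ∈ N) → N = ⊥)
    (V W : Subgroup G) (hVc : IsCompact (V : Set G)) (hWc : IsCompact (W : Set G))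
    (hVo : IsOpen ((V : Set G) * connectedComponent (1 : G)))
    (hWo : IsOpen ((W : Set G) * connectedComponent (1 : G)))
    (hVn : Subgroup.connectedComponentOfOne G ≤ Subgroup.normalizer (V : Set G))
    (hWn : Subgroup.connectedComponentOfOne G ≤ Subgroup.normalizer (W : Set G)) :
    W.relIndex V ≠ 0 ∧ V.relIndex W ≠ 0 := by
  set C := Subgroup.connectedComponentOfOne G with hCdef
  haveI hCn : C.Normal := by
    constructor
    intro x hx g
    have h1 : (fun y => g * y * g⁻¹) '' connectedComponent (1 : G) ⊆
        connectedComponent (g * 1 * g⁻¹) :=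
      Continuous.image_connectedComponent_subset (by continuity) 1
    have h2 : g * (1 : G) * g⁻¹ = 1 := by group
    rw [h2] at h1
    exact h1 ⟨x, hx, rfl⟩
  have hCclosed : IsClosed (C : Set G) := isClosed_connectedComponent
  -- step 1 : V ⊓ C = ⊥ and W ⊓ C = ⊥
  have inters : ∀ U : Subgroup G, IsCompact (U : Set G) → C ≤ Subgroup.normalizer (U : Set G) →
      U ⊓ C = ⊥ := by
    intro U hUc hUn
    apply hW _ inf_le_right
    · rw [Subgroup.coe_inf]
      exact hUc.inter_right hCclosed
    · intro g hg x hx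
      rw [Subgroup.mem_inf] at hx ⊢
      exact ⟨(Subgroup.mem_normalizer_iff.mp (hUn hg) x).mp hx.1,
        hCn.conj_mem x hx.2 g⟩
  have hVbot : V ⊓ C = ⊥ := inters V hVc hVn
  have hWbot : W ⊓ C = ⊥ := inters W hWc hWn
  -- step 2 : V and W centralize C
  have comm : ∀ (U : Subgroup G), U ⊓ C = ⊥ → C ≤ Subgroup.normalizer (U : Set G) →
      ∀ v ∈ U, ∀ g ∈ C, g * v = v * g := by
    intro U hUbot hUn v hv g hg
    have hc : v * g * v⁻¹ * g⁻¹ ∈ U ⊓ C := by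
      rw [Subgroup.mem_inf]
      constructor
      · have h3 : g * v⁻¹ * g⁻¹ ∈ U :=
          (Subgroup.mem_normalizer_iff.mp (hUn hg) v⁻¹).mp (inv_mem hv)
        have h4 := mul_mem hv h3
        convert h4 using 1
        group
      · exact mul_mem (hCn.conj_mem g hg v) (inv_mem hg)
    rw [hUbot, Subgroup.mem_bot] at hc
    have h5 : (v * g) * (g * v)⁻¹ = 1 := by rw [← hc]; group
    exact (mul_inv_eq_one.mp h5).symm
  have hVcomm := comm V hVbot hVn
  have hWcomm := comm W hWbot hWn
  -- open subgroups
  have hWo' : IsOpen ((W ⊔ C : Subgroup G) : Set G) := by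
    rw [Subgroup.mul_normal]; exact hWo
  have hVo' : IsOpen ((V ⊔ C : Subgroup G) : Set G) := by
    rw [Subgroup.mul_normal]; exact hVo
  set V₁ := V ⊓ (W ⊔ C) with hV₁def
  set W₁ := W ⊓ (V ⊔ C) with hW₁def
  have hV₁c : IsCompact (V₁ : Set G) := by
    rw [hV₁def, Subgroup.coe_inf]
    exact hVc.inter_right ((W ⊔ C).isClosed_of_isOpen hWo')
  have hW₁c : IsCompact (W₁ : Set G) := by
    rw [hW₁def, Subgroup.coe_inf]
    exact hWc.inter_right ((V ⊔ C).isClosed_of_isOpen hVo')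
  -- W₁ normalizes V₁ and V₁ normalizes W₁
  have hnorm : ∀ (A B : Subgroup G), (∀ v ∈ A, ∀ g ∈ C, g * v = v * g) →
      ∀ w ∈ B ⊓ (A ⊔ C), ∀ v ∈ A ⊓ (B ⊔ C), w * v * w⁻¹ ∈ A ⊓ (B ⊔ C) := by
    intro A B hAcomm w hw v hv
    rw [Subgroup.mem_inf] at hw hv ⊢
    refine ⟨?_, ?_⟩
    · have hw2 := hw.2
      rw [← SetLike.mem_coe, Subgroup.mul_normal] at hw2
      obtain ⟨a, ha, g, hg, rfl⟩ := hw2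
      have hcomm : g * v * g⁻¹ = v := by
        rw [hAcomm v hv.1 g hg]; group
      have heq : (a * g) * v * (a * g)⁻¹ = a * (g * v * g⁻¹) * a⁻¹ := by group
      rw [heq, hcomm]
      exact mul_mem (mul_mem ha hv.1) (inv_mem ha)
    · have hwBC : w ∈ B ⊔ C := (le_sup_left : B ≤ B ⊔ C) hw.1
      exact mul_mem (mul_mem hwBC hv.2) (inv_mem hwBC)
  have hnormVW : ∀ w ∈ W₁, ∀ v ∈ V₁, w * v * w⁻¹ ∈ V₁ := hnorm V W hVcomm
  have hnormWV : ∀ v ∈ V₁, ∀ w ∈ W₁, v * w * v⁻¹ ∈ W₁ := hnorm W V hWcomm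
  -- the product subgroup K = V₁ * W₁
  set K : Subgroup G :=
    { carrier := (V₁ : Set G) * (W₁ : Set G)
      one_mem' := ⟨1, one_mem V₁, 1, one_mem W₁, mul_one 1⟩
      mul_mem' := by
        rintro x y ⟨v, hv, w, hw, rfl⟩ ⟨v', hv', w', hw', rfl⟩
        refine ⟨v * (w * v' * w⁻¹), mul_mem hv (hnormVW w hw v' hv'), w * w',
          mul_mem hw hw', by group⟩
      inv_mem' := by
        rintro x ⟨v, hv, w, hw, rfl⟩
        refine ⟨w⁻¹ * v⁻¹ * w⁻¹⁻¹, hnormVW w⁻¹ (inv_mem hw) v⁻¹ (inv_mem hv),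
          w⁻¹, inv_mem hw, by group⟩ } with hKdef
  have hKc : IsCompact (K : Set G) := hV₁c.mul hW₁c
  have hCK : C ⊓ K = ⊥ := by
    apply hW _ inf_le_left
    · rw [Subgroup.coe_inf]
      exact hKc.inter_left hCclosed
    · intro g hg x hx
      rw [Subgroup.mem_inf] at hx ⊢
      refine ⟨mul_mem (mul_mem hg hx.1) (inv_mem hg), ?_⟩
      obtain ⟨v, hv, w, hw, rfl⟩ := hx.2
      have hvV : v ∈ V := (Subgroup.mem_inf.mp hv).1
      have hwW : w ∈ W := (Subgroup.mem_inf.mp hw).1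
      have h1 : g * v = v * g := hVcomm v hvV g hg
      have h2 : g * w = w * g := hWcomm w hwW g hg
      have h3 : g * (v * w) * g⁻¹ = v * w := by
        calc g * (v * w) * g⁻¹ = (g * v) * w * g⁻¹ := by group
          _ = v * (g * w) * g⁻¹ := by rw [h1]; group
          _ = v * (w * g) * g⁻¹ := by rw [h2]
          _ = v * w := by group
      rw [h3]
      exact hx.2
  -- V₁ ≤ W
  have hV₁W : V₁ ≤ W := by
    intro y hy
    have hy' := hy
    rw [hV₁def, Subgroup.mem_inf] at hy'
    have hy2 := hy'.2
    rw [← SetLike.mem_coe, Subgroup.mul_normal] at hy2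
    obtain ⟨w, hw, g, hg, hdec⟩ := hy2
    have hwW₁ : w ∈ W₁ := by
      rw [hW₁def, Subgroup.mem_inf]
      refine ⟨hw, ?_⟩
      have hweq : w = y * g⁻¹ := by rw [← hdec]; group
      rw [hweq]
      exact mul_mem ((le_sup_left : V ≤ V ⊔ C) hy'.1)
        ((le_sup_right : C ≤ V ⊔ C) (inv_mem hg))
    have hgK : g⁻¹ ∈ C ⊓ K := by
      rw [Subgroup.mem_inf]
      refine ⟨inv_mem hg, ?_⟩
      have hgeq : g⁻¹ = y⁻¹ * w := by rw [← hdec]; group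
      rw [hgeq]
      exact ⟨y⁻¹, inv_mem hy, w, hwW₁, rfl⟩
    rw [hCK, Subgroup.mem_bot] at hgK
    have hg1 : g = 1 := inv_eq_one.mp hgK
    simp only [hg1, mul_one] at hdec
    exact hdec ▸ hw
  -- W₁ ≤ V
  have hW₁V : W₁ ≤ V := by
    intro x hx
    have hx' := hx
    rw [hW₁def, Subgroup.mem_inf] at hx'
    have hx2 := hx'.2
    rw [← SetLike.mem_coe, Subgroup.mul_normal] at hx2
    obtain ⟨v, hv, g, hg, hdec⟩ := hx2
    have hvV₁ : v ∈ V₁ := by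
      rw [hV₁def, Subgroup.mem_inf]
      refine ⟨hv, ?_⟩
      have hveq : v = x * g⁻¹ := by rw [← hdec]; group
      rw [hveq]
      exact mul_mem ((le_sup_left : W ≤ W ⊔ C) hx'.1)
        ((le_sup_right : C ≤ W ⊔ C) (inv_mem hg))
    have hgK : g ∈ C ⊓ K := by
      rw [Subgroup.mem_inf]
      refine ⟨hg, ?_⟩
      have hgeq : g = v⁻¹ * x := by rw [← hdec]; group
      rw [hgeq]
      exact ⟨v⁻¹, inv_mem hvV₁, x, hx, rfl⟩
    rw [hCK, Subgroup.mem_bot] at hgK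
    simp only [hgK, mul_one] at hdec
    exact hdec ▸ hv
  -- finite index of open subgroups in compact groups
  have hfin : ∀ (A B : Subgroup G), IsCompact (A : Set G) →
      IsOpen ((B ⊔ C : Subgroup G) : Set G) → ((B ⊔ C).subgroupOf A).index ≠ 0 := by
    intro A B hAc hBo
    haveI : CompactSpace A := isCompact_iff_compactSpace.mp hAc
    have hopen : IsOpen (((B ⊔ C).subgroupOf A : Subgroup A) : Set A) := by
      have hpre : (((B ⊔ C).subgroupOf A : Subgroup A) : Set A) =
          (Subtype.val) ⁻¹' ((B ⊔ C : Subgroup G) : Set G) := rfl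
      rw [hpre]
      exact hBo.preimage continuous_subtype_val
    haveI := Subgroup.quotient_finite_of_isOpen _ hopen
    exact Subgroup.index_ne_zero_of_finite
  constructor
  · have hdvd : (W.subgroupOf V).index ∣ ((W ⊔ C).subgroupOf V).index :=
      Subgroup.index_dvd_of_le (fun x hx => Subgroup.mem_subgroupOf.mpr
        (hV₁W (Subgroup.mem_inf.mpr ⟨x.2, Subgroup.mem_subgroupOf.mp hx⟩)))
    exact fun h0 => hfin V W hVc hWo' (zero_dvd_iff.mp (h0 ▸ hdvd))
  · have hdvd : (V.subgroupOf W).index ∣ ((V ⊔ C).subgroupOf W).index :=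
      Subgroup.index_dvd_of_le (fun x hx => Subgroup.mem_subgroupOf.mpr
        (hW₁V (Subgroup.mem_inf.mpr ⟨x.2, Subgroup.mem_subgroupOf.mp hx⟩)))
    exact fun h0 => hfin W V hWc hVo' (zero_dvd_iff.mp (h0 ▸ hdvd))
end

section
/- Let G be a locally compact group such that G° has no nontrivial compact normal subgroup, and let V be a compact subgroup of G with V·G° open and G° ≤ N_G(V). Then V ∩ G° = {e}, V is totally disconnected, and the multiplication map V × G° → V·G° is an isomorphism of topological groups. -/
open Set Pointwise Topology Filter

/-- A connected, weakly locally compact topological group is σ-compact. -/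
private lemma connected_group_sigmaCompact {H : Type*} [Group H] [TopologicalSpace H]
    [IsTopologicalGroup H] [WeaklyLocallyCompactSpace H] [ConnectedSpace H] :
    SigmaCompactSpace H := by
  obtain ⟨K, hKc, hK1⟩ := exists_compact_mem_nhds (1 : H)
  set L : Set H := (K ∪ K⁻¹) ∪ {1} with hLdef
  have hLc : IsCompact L := (hKc.union hKc.inv).union isCompact_singleton
  have hL1 : (1 : H) ∈ L := Or.inr rfl
  have hLsymm : L⁻¹ ⊆ L := by
    intro x hx
    rw [Set.mem_inv] at hx
    rcases hx with (h | h) | h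
    · exact Or.inl (Or.inr (Set.mem_inv.2 (by simpa using h)))
    · exact Or.inl (Or.inl (by simpa using Set.mem_inv.1 h))
    · simp only [Set.mem_singleton_iff] at h
      exact Or.inr (by simp [inv_eq_one.1 h])
  have hLn : L ∈ 𝓝 (1 : H) := Filter.mem_of_superset hK1 fun x hx => Or.inl (Or.inl hx)
  have hpow : ∀ n : ℕ, IsCompact (L ^ (n + 1)) := by
    intro n
    induction n with
    | zero => simpa [pow_one] using hLc
    | succ n ih => rw [pow_succ]; exact ih.mul hLc
  set A : Set H := ⋃ n : ℕ, L ^ (n + 1) with hAdef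
  have hmulL : A * L ⊆ A := by
    rintro x ⟨a, ha, b, hb, rfl⟩
    obtain ⟨n, hn⟩ := mem_iUnion.1 ha
    exact mem_iUnion.2 ⟨n + 1, by rw [pow_succ]; exact Set.mul_mem_mul hn hb⟩
  have himg : ∀ a : H, (fun x => a * x) '' L ∈ 𝓝 a := by
    intro a
    have h1 : (fun x => a * x) '' L ∈ Filter.map (fun x => a * x) (𝓝 (1 : H)) :=
      Filter.image_mem_map hLn
    have h2 : Filter.map (fun x => a * x) (𝓝 (1 : H)) = 𝓝 (a * 1) :=
      (Homeomorph.mulLeft a).map_nhds_eq 1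
    rwa [h2, mul_one] at h1
  have hAopen : IsOpen A := by
    rw [isOpen_iff_mem_nhds]
    intro a ha
    refine Filter.mem_of_superset (himg a) ?_
    rintro _ ⟨x, hx, rfl⟩
    exact hmulL (Set.mul_mem_mul ha hx)
  have hAclosed : IsClosed A := by
    rw [← isOpen_compl_iff, isOpen_iff_mem_nhds]
    intro a ha
    refine Filter.mem_of_superset (himg a) ?_
    rintro _ ⟨x, hx, rfl⟩
    intro hmem
    apply ha
    have : a * x * x⁻¹ ∈ A := hmulL (Set.mul_mem_mul hmem (hLsymm (Set.inv_mem_inv.2 hx)))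
    simpa using this
  have hA1 : (1 : H) ∈ A := mem_iUnion.2 ⟨0, by simpa [pow_one] using hL1⟩
  have hAuniv : A = univ := IsClopen.eq_univ ⟨hAclosed, hAopen⟩ ⟨1, hA1⟩
  exact ⟨⟨fun n => L ^ (n + 1), fun n => hpow n, hAuniv⟩⟩

/-- If `G°` has no nontrivial compact normal subgroup and `V` is a compact
subgroup with `V⬝G°` open and `G° ≤ N_G(V)`, then `V ∩ G° = {e}`, `V` is
totally disconnected, and multiplication gives an isomorphism of topological
groups `V × G° ≃ V⬝G°`. -/
theorem stmt_19 {G : Type*} [Group G] [TopologicalSpace G] [IsTopologicalGroup G]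
    [LocallyCompactSpace G] [T2Space G]
    (hW : ∀ N : Subgroup G, N ≤ Subgroup.connectedComponentOfOne G →
      IsCompact (N : Set G) →
      (∀ g ∈ Subgroup.connectedComponentOfOne G, ∀ x ∈ N, g * x * g⁻¹ ∈ N) → N = ⊥)
    (V : Subgroup G) (hVc : IsCompact (V : Set G))
    (hVo : IsOpen ((V : Set G) * connectedComponent (1 : G)))
    (hVn : Subgroup.connectedComponentOfOne G ≤ Subgroup.normalizer (V : Set G)) :
    V ⊓ Subgroup.connectedComponentOfOne G = ⊥ ∧
    IsTotallyDisconnected (V : Set G) ∧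
    ∃ S : Subgroup G, (S : Set G) = (V : Set G) * connectedComponent (1 : G) ∧
      ∃ e : (V × Subgroup.connectedComponentOfOne G) ≃ₜ S,
        (∀ p : V × Subgroup.connectedComponentOfOne G,
          (e p : G) = (p.1 : G) * (p.2 : G)) ∧
        ∀ p q, e (p * q) = e p * e q := by
  set C := Subgroup.connectedComponentOfOne G with hCdef
  have hCcoe : (C : Set G) = connectedComponent (1 : G) := rfl
  -- C is normal
  have hCnorm : C.Normal := by
    constructor
    intro n hn g
    have hc : Continuous fun y : G => g * y * g⁻¹ := by continuity
    have h := hc.image_connectedComponent_subset 1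
    simp only [mul_one, mul_inv_cancel] at h
    exact h ⟨n, hn, rfl⟩
  -- Part 1
  have h1 : V ⊓ C = ⊥ := by
    apply hW
    · exact inf_le_right
    · have hco : ((V ⊓ C : Subgroup G) : Set G) = (V : Set G) ∩ connectedComponent (1 : G) := rfl
      rw [hco]
      exact hVc.inter_right isClosed_connectedComponent
    · intro g hg x hx
      rw [Subgroup.mem_inf] at hx ⊢
      exact ⟨(Subgroup.mem_normalizer_iff.mp (hVn hg) x).mp hx.1,
        hCnorm.conj_mem x hx.2 g⟩
  -- elementwise commutation of V and C
  have hcomm : ∀ v ∈ V, ∀ x ∈ C, (v : G) * x = x * v := by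
    intro v hv x hx
    have hcV : x * v * x⁻¹ * v⁻¹ ∈ V := by
      have h1' : x * v * x⁻¹ ∈ V := (Subgroup.mem_normalizer_iff.mp (hVn hx) v).mp hv
      exact V.mul_mem h1' (V.inv_mem hv)
    have hcC : x * v * x⁻¹ * v⁻¹ ∈ C := by
      have h2' : v * x⁻¹ * v⁻¹ ∈ C := by
        have := hCnorm.conj_mem x⁻¹ (C.inv_mem hx) v
        simpa [mul_assoc] using this
      have := C.mul_mem hx h2'
      simpa [mul_assoc] using this
    have : x * v * x⁻¹ * v⁻¹ ∈ V ⊓ C := ⟨hcV, hcC⟩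
    rw [h1, Subgroup.mem_bot] at this
    have h3 : x * v = v * x := by
      have h4 : x * v * x⁻¹ * v⁻¹ * (v * x) = v * x := by rw [this, one_mul]
      calc x * v = x * v * x⁻¹ * v⁻¹ * (v * x) := by group
        _ = v * x := h4
    exact h3.symm
  -- Part 2
  have h2 : IsTotallyDisconnected (V : Set G) := by
    intro t hts htconn a ha b hb
    set s : Set G := (fun y => a⁻¹ * y) '' t with hsdef
    have hsconn : IsPreconnected s := htconn.image _ (continuous_mul_left _).continuousOn
    have hs1 : (1 : G) ∈ s := ⟨a, ha, inv_mul_cancel a⟩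
    have hssub : s ⊆ (↑(V ⊓ C) : Set G) := by
      rintro _ ⟨c, hc, rfl⟩
      refine ⟨V.mul_mem (V.inv_mem (hts ha)) (hts hc), ?_⟩
      exact hsconn.subset_connectedComponent hs1 ⟨c, hc, rfl⟩
    have hb1 : a⁻¹ * b ∈ (↑(V ⊓ C) : Set G) := hssub ⟨b, hb, rfl⟩
    rw [h1] at hb1
    simp only [Subgroup.coe_bot, Set.mem_singleton_iff] at hb1
    exact inv_mul_eq_one.mp hb1
  refine ⟨h1, h2, ?_⟩
  -- Part 3
  set S : Subgroup G := V ⊔ C with hSdef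
  have hScoe : (S : Set G) = (V : Set G) * connectedComponent (1 : G) := by
    rw [hSdef, Subgroup.mul_normal V C, hCcoe]
  have hSopen : IsOpen (S : Set G) := hScoe ▸ hVo
  -- the multiplication homomorphism
  have hmem : ∀ p : V × C, (p.1 : G) * (p.2 : G) ∈ S :=
    fun p => S.mul_mem (Subgroup.mem_sup_left p.1.2) (Subgroup.mem_sup_right p.2.2)
  let ψ : (V × C) →* S :=
    { toFun := fun p => ⟨(p.1 : G) * (p.2 : G), hmem p⟩
      map_one' := by ext; simp
      map_mul' := by
        rintro ⟨v1, x1⟩ ⟨v2, x2⟩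
        ext
        push_cast
        have hc : (x1 : G) * (v2 : G) = (v2 : G) * (x1 : G) := (hcomm v2 v2.2 x1 x1.2).symm
        show (v1 : G) * v2 * ((x1 : G) * x2) = (v1 : G) * x1 * ((v2 : G) * x2)
        rw [mul_assoc, mul_assoc, ← mul_assoc (v2 : G) (x1 : G), ← hc,
          mul_assoc (x1 : G), ← mul_assoc (v1 : G)] }
  have hψcont : Continuous ψ := by
    apply Continuous.subtype_mk
    exact ((continuous_subtype_val.comp continuous_fst).mul
      (continuous_subtype_val.comp continuous_snd))
  have hψinj : Function.Injective ψ := by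
    rw [injective_iff_map_eq_one]
    rintro ⟨v, x⟩ hp
    have h0 : (v : G) * (x : G) = 1 := congrArg Subtype.val hp
    have hv : (v : G) = (x : G)⁻¹ := eq_inv_of_mul_eq_one_left h0
    have hvC : (v : G) ∈ C := hv ▸ C.inv_mem x.2
    have hvb : (v : G) ∈ V ⊓ C := ⟨v.2, hvC⟩
    rw [h1, Subgroup.mem_bot] at hvb
    have hx1 : (x : G) = 1 := by rw [hvb] at h0; simpa using h0
    refine Prod.ext ?_ ?_
    · exact Subtype.ext hvb
    · exact Subtype.ext hx1
  have hψsurj : Function.Surjective ψ := by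
    rintro ⟨s, hs⟩
    have hs' : s ∈ (V : Set G) * connectedComponent (1 : G) := by rw [← hScoe]; exact hs
    obtain ⟨v, hv, x, hx, rfl⟩ := hs'
    exact ⟨(⟨v, hv⟩, ⟨x, hx⟩), rfl⟩
  -- instances
  haveI : CompactSpace V := isCompact_iff_compactSpace.mp hVc
  haveI : LocallyCompactSpace C := by
    have : IsClosed (C : Set G) := isClosed_connectedComponent
    exact this.locallyCompactSpace
  haveI : ConnectedSpace C := by
    have : ConnectedSpace (connectedComponent (1 : G)) :=
      Subtype.connectedSpace isConnected_connectedComponent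
    exact this
  haveI : SigmaCompactSpace C := connected_group_sigmaCompact
  haveI : SigmaCompactSpace (V × C) := inferInstance
  haveI : LocallyCompactSpace S := hSopen.locallyCompactSpace
  have hψopen : IsOpenMap ψ := ψ.isOpenMap_of_sigmaCompact hψsurj hψcont
  let eq : (V × C) ≃ S := Equiv.ofBijective ψ ⟨hψinj, hψsurj⟩
  let e : (V × C) ≃ₜ S := Equiv.toHomeomorphOfContinuousOpen eq hψcont hψopen
  refine ⟨S, hScoe, e, fun p => rfl, fun p q => ?_⟩
  show eq (p * q) = eq p * eq q
  simp only [eq, Equiv.ofBijective_apply]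
  exact ψ.map_mul p q
end
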